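/- In the FedAvg setup with uniqueness of samples, fix a neuron h and a round t, and define Ã^h_{t,0} = { x ∈ A^h_t : W^h_{t−1} · x + b^h_{t−1} > 0 }. If Ã^h_{t,0} is a singleton {x'} and x' belongs to client k (i.e., (x', y') ∈ D_k for some label y'), then every sample x in the round-level activation set A^h_t belongs to client k (i.e., for every x ∈ A^h_t there is a label y with (x, y) ∈ D_k). -/

import Mathlib

noncomputable section

/-- Pre-activation `W^h · x + b^h` of neuron `h` on sample `x`. -/
def preact {d H : ℕ} (W : Fin H → Fin d → ℝ) (b : Fin H → ℝ) (x : Fin d → ℝ)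
    (h : Fin H) : ℝ :=
  (∑ j, W h j * x j) + b h

/-- Componentwise ReLU output of the first layer. -/
def reluVec {d H : ℕ} (W : Fin H → Fin d → ℝ) (b : Fin H → ℝ) (x : Fin d → ℝ) :
    Fin H → ℝ :=
  fun h => max (preact W b x h) 0

/-- `F_{φ,y}(z) = ℓ(f(φ, z), y)`. -/
def Floss {H r C : ℕ} {Y : Type*} (f : (Fin r → ℝ) → (Fin H → ℝ) → Fin C → ℝ)
    (l : (Fin C → ℝ) → Y → ℝ) (φ : Fin r → ℝ) (y : Y) (z : Fin H → ℝ) : ℝ :=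
  l (f φ z) y

/-- Partial derivative of `F : ℝ^H → ℝ` in the `h`-th coordinate at `z`. -/
def dFh {H : ℕ} (F : (Fin H → ℝ) → ℝ) (z : Fin H → ℝ) (h : Fin H) : ℝ :=
  fderiv ℝ F z (Pi.single h 1)

/-- The loss of the model `θ = (W, b, φ)` on the batch `B`:
`L(θ; B) = ∑_{(x,y) ∈ B} ℓ(f(φ, ReLU(W x + b)), y)`. -/
def batchLoss {d H r C : ℕ} {Y : Type*} (f : (Fin r → ℝ) → (Fin H → ℝ) → Fin C → ℝ)
    (l : (Fin C → ℝ) → Y → ℝ)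
    (θ : (Fin H → Fin d → ℝ) × (Fin H → ℝ) × (Fin r → ℝ))
    (B : Finset ((Fin d → ℝ) × Y)) : ℝ :=
  ∑ p ∈ B, Floss f l θ.2.2 p.2 (reluVec θ.1 θ.2.1 p.1)

open Classical in
/-- Batch-level activation set `A^h(θ, B)` of neuron `h`, as a finset of
sample/label pairs of the batch. -/
def activB {d H r C : ℕ} {Y : Type*} (f : (Fin r → ℝ) → (Fin H → ℝ) → Fin C → ℝ)
    (l : (Fin C → ℝ) → Y → ℝ)
    (θ : (Fin H → Fin d → ℝ) × (Fin H → ℝ) × (Fin r → ℝ))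
    (B : Finset ((Fin d → ℝ) × Y)) (h : Fin H) : Finset ((Fin d → ℝ) × Y) :=
  B.filter (fun p => 0 < preact θ.1 θ.2.1 p.1 h ∧
    dFh (Floss f l θ.2.2 p.2) (reluVec θ.1 θ.2.1 p.1) h ≠ 0)

/-- The gradient of a function on the parameter space, assembled coordinatewise
from directional derivatives. -/
def gradP {d H r : ℕ} (L : ((Fin H → Fin d → ℝ) × (Fin H → ℝ) × (Fin r → ℝ)) → ℝ)
    (θ : (Fin H → Fin d → ℝ) × (Fin H → ℝ) × (Fin r → ℝ)) :
    (Fin H → Fin d → ℝ) × (Fin H → ℝ) × (Fin r → ℝ) :=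
  (fun h j => fderiv ℝ L θ (Pi.single h (Pi.single j 1), 0, 0),
   fun h => fderiv ℝ L θ (0, Pi.single h 1, 0),
   fun s => fderiv ℝ L θ (0, 0, Pi.single s 1))

/-- Round-level activation set `A^h_t` of neuron `h`: the set of samples activating
neuron `h` at some local update of some client during the round. -/
def roundActiv {d H r C K : ℕ} {Y : Type*} (f : (Fin r → ℝ) → (Fin H → ℝ) → Fin C → ℝ)
    (l : (Fin C → ℝ) → Y → ℝ) (n : ℕ)
    (θ : Fin K → ℕ → ((Fin H → Fin d → ℝ) × (Fin H → ℝ) × (Fin r → ℝ)))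
    (Bt : Fin K → ℕ → Finset ((Fin d → ℝ) × Y)) (h : Fin H) : Set (Fin d → ℝ) :=
  {x | ∃ k, ∃ i < n, ∃ y, (x, y) ∈ activB f l (θ k i) (Bt k i) h}

/-! The parameters `(W^h, b^h)` of neuron `h` receive the gradient `∑_p δ_h(p) • (x_p, 1)`, where
`δ_h(p) = 1[W^h·x_p + b^h > 0] · ∂_h F_{φ,y_p}(ReLU(W x_p + b))` vanishes for every sample outside
the activation set. So on each client `(W^h, b^h)` keeps its round-start value `θ_{t-1}` up to the
first local step at which some sample activates `h`, and that sample is then already active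
under `θ_{t-1}`: it lies in `Ã^h_{t,0} = {x'}`. Every client contributing to `A^h_t` therefore holds
`x'`, and by uniqueness of samples it is client `k`. -/

open ContinuousLinearMap

theorem hasDerivAt_max_zero {t : ℝ} (ht : t ≠ 0) :
    HasDerivAt (fun s : ℝ => max s 0) (if 0 < t then 1 else 0) t := by
  rcases ht.lt_or_gt with hneg | hpos
  · rw [if_neg hneg.not_gt]
    refine (hasDerivAt_const t 0).congr_of_eventuallyEq ?_
    filter_upwards [eventually_lt_nhds hneg] with s hs using max_eq_right hs.le
  · rw [if_pos hpos]
    refine (hasDerivAt_id t).congr_of_eventuallyEq ?_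
    filter_upwards [eventually_gt_nhds hpos] with s hs using max_eq_left hs.le

section ReLU

variable {ι : Type*}

def relu (v : ι → ℝ) : ι → ℝ := fun i => max (v i) 0

def reluDeriv (v : ι → ℝ) : (ι → ℝ) →L[ℝ] (ι → ℝ) :=
  pi fun i => (if 0 < v i then (1 : ℝ) else 0) • proj i

theorem hasFDerivAt_relu [Fintype ι] {v : ι → ℝ} (hv : ∀ i, v i ≠ 0) :
    HasFDerivAt relu (reluDeriv v) v :=
  hasFDerivAt_pi.2 fun i =>
    (hasDerivAt_max_zero (hv i)).comp_hasFDerivAt (f := fun w : ι → ℝ => w i) v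
      (hasFDerivAt_apply i v)

theorem reluDeriv_single [DecidableEq ι] (v : ι → ℝ) (i : ι) (c : ℝ) :
    reluDeriv v (Pi.single i c) = Pi.single i ((if 0 < v i then 1 else 0) * c) := by
  funext j
  simp only [reluDeriv, pi_apply, smul_apply, proj_apply, smul_eq_mul]
  by_cases hj : j = i
  · subst hj; simp
  · simp [Pi.single_eq_of_ne hj]

end ReLU

abbrev Params (d H r : ℕ) := (Fin H → Fin d → ℝ) × (Fin H → ℝ) × (Fin r → ℝ)

section Preactivation

variable {d H r : ℕ}

def preactCLM (x : Fin d → ℝ) : Params d H r →L[ℝ] (Fin H → ℝ) :=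
  LinearMap.toContinuousLinearMap
    { toFun := fun ψ h => preact ψ.1 ψ.2.1 x h
      map_add' := fun ψ ψ' => by
        funext h
        simp only [preact, Prod.fst_add, Prod.snd_add, Pi.add_apply, add_mul,
          Finset.sum_add_distrib]
        ring
      map_smul' := fun c ψ => by
        funext h
        simp only [preact, Prod.smul_fst, Prod.smul_snd, Pi.smul_apply, smul_eq_mul, mul_assoc,
          ← Finset.mul_sum, RingHom.id_apply]
        ring }

theorem preactCLM_apply (x : Fin d → ℝ) (ψ : Params d H r) :
    preactCLM x ψ = fun h => preact ψ.1 ψ.2.1 x h := rfl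

theorem preactCLM_eq_single {x : Fin d → ℝ} {u : Params d H r} {h : Fin H}
    (hu : ∀ h' ≠ h, u.1 h' = 0 ∧ u.2.1 h' = 0) :
    preactCLM x u = Pi.single h (preact u.1 u.2.1 x h) := by
  funext h'
  by_cases hh : h' = h
  · subst hh; simp [preactCLM_apply]
  · simp [preactCLM_apply, preact, Pi.single_eq_of_ne hh, (hu h' hh).1, (hu h' hh).2]

end Preactivation

section Loss

variable {d H r C : ℕ} {Y : Type*} (f : (Fin r → ℝ) → (Fin H → ℝ) → Fin C → ℝ)
  (l : (Fin C → ℝ) → Y → ℝ)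

def neuronDelta (θ : Params d H r) (p : (Fin d → ℝ) × Y) (h : Fin H) : ℝ :=
  (if 0 < preact θ.1 θ.2.1 p.1 h then 1 else 0) *
    dFh (Floss f l θ.2.2 p.2) (reluVec θ.1 θ.2.1 p.1) h

theorem neuronDelta_eq_zero_of_notMem_activB {θ : Params d H r} {B : Finset ((Fin d → ℝ) × Y)}
    {p : (Fin d → ℝ) × Y} {h : Fin H} (hp : p ∈ B) (hpa : p ∉ activB f l θ B h) :
    neuronDelta f l θ p h = 0 := by
  simp only [activB, Finset.mem_filter, hp, true_and, not_and, not_not] at hpa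
  unfold neuronDelta
  split_ifs with hpos
  · rw [hpa hpos, mul_zero]
  · rw [zero_mul]

variable {f l}

theorem hasFDerivAt_sampleLoss
    (hf : Differentiable ℝ (fun q : (Fin r → ℝ) × (Fin H → ℝ) => f q.1 q.2))
    (hl : ∀ y, Differentiable ℝ (fun u => l u y))
    {θ : Params d H r} {p : (Fin d → ℝ) × Y} (hnd : ∀ h', preact θ.1 θ.2.1 p.1 h' ≠ 0) :
    HasFDerivAt (fun ψ : Params d H r => Floss f l ψ.2.2 p.2 (reluVec ψ.1 ψ.2.1 p.1))
      ((fderiv ℝ (fun q : (Fin r → ℝ) × (Fin H → ℝ) => l (f q.1 q.2) p.2)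
          (θ.2.2, reluVec θ.1 θ.2.1 p.1)).comp
        (((snd ℝ _ _).comp (snd ℝ _ _)).prod
          ((reluDeriv (preactCLM p.1 θ)).comp (preactCLM p.1)))) θ := by
  have hinner : HasFDerivAt (fun ψ : Params d H r => (ψ.2.2, relu (preactCLM p.1 ψ)))
      (((snd ℝ _ _).comp (snd ℝ _ _)).prod
        ((reluDeriv (preactCLM p.1 θ)).comp (preactCLM p.1))) θ :=
    ((snd ℝ _ _).comp (snd ℝ _ _)).hasFDerivAt.prodMk
      ((hasFDerivAt_relu hnd).comp θ (preactCLM p.1).hasFDerivAt)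
  exact (((hl p.2).comp hf) _).hasFDerivAt.comp θ hinner

theorem fderiv_Floss_apply
    (hf : Differentiable ℝ (fun q : (Fin r → ℝ) × (Fin H → ℝ) => f q.1 q.2))
    (hl : ∀ y, Differentiable ℝ (fun u => l u y)) (φ : Fin r → ℝ) (y : Y) (z v : Fin H → ℝ) :
    fderiv ℝ (Floss f l φ y) z v =
      fderiv ℝ (fun q : (Fin r → ℝ) × (Fin H → ℝ) => l (f q.1 q.2) y) (φ, z) (0, v) := by
  have hsection : HasFDerivAt (Floss f l φ y)
      ((fderiv ℝ (fun q : (Fin r → ℝ) × (Fin H → ℝ) => l (f q.1 q.2) y) (φ, z)).comp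
        (inr ℝ _ _)) z :=
    (((hl y).comp hf) _).hasFDerivAt.comp z (hasFDerivAt_prodMk_right φ z)
  rw [hsection.fderiv, comp_apply, inr_apply]

theorem fderiv_sampleLoss_apply
    (hf : Differentiable ℝ (fun q : (Fin r → ℝ) × (Fin H → ℝ) => f q.1 q.2))
    (hl : ∀ y, Differentiable ℝ (fun u => l u y))
    {θ : Params d H r} {p : (Fin d → ℝ) × Y} (hnd : ∀ h', preact θ.1 θ.2.1 p.1 h' ≠ 0)
    {h : Fin H} {u : Params d H r} (hu₂ : u.2.2 = 0) (hu : ∀ h' ≠ h, u.1 h' = 0 ∧ u.2.1 h' = 0) :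
    fderiv ℝ (fun ψ : Params d H r => Floss f l ψ.2.2 p.2 (reluVec ψ.1 ψ.2.1 p.1)) θ u =
      neuronDelta f l θ p h * preact u.1 u.2.1 p.1 h := by
  rw [(hasFDerivAt_sampleLoss hf hl hnd).fderiv, neuronDelta, dFh, fderiv_Floss_apply hf hl]
  simp only [comp_apply, prod_apply, coe_snd', hu₂, preactCLM_eq_single hu, reluDeriv_single,
    preactCLM_apply]
  set c := (if 0 < preact θ.1 θ.2.1 p.1 h then (1 : ℝ) else 0) * preact u.1 u.2.1 p.1 h
  have hdir : ((0 : Fin r → ℝ), (Pi.single h c : Fin H → ℝ)) = c • (0, Pi.single h 1) := by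
    simp [← Pi.single_smul']
  rw [hdir, map_smul, smul_eq_mul]
  ring

theorem fderiv_batchLoss_apply
    (hf : Differentiable ℝ (fun q : (Fin r → ℝ) × (Fin H → ℝ) => f q.1 q.2))
    (hl : ∀ y, Differentiable ℝ (fun u => l u y))
    {θ : Params d H r} {B : Finset ((Fin d → ℝ) × Y)}
    (hnd : ∀ h', ∀ p ∈ B, preact θ.1 θ.2.1 p.1 h' ≠ 0)
    {h : Fin H} {u : Params d H r} (hu₂ : u.2.2 = 0) (hu : ∀ h' ≠ h, u.1 h' = 0 ∧ u.2.1 h' = 0) :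
    fderiv ℝ (fun ψ : Params d H r => batchLoss f l ψ B) θ u =
      ∑ p ∈ B, neuronDelta f l θ p h * preact u.1 u.2.1 p.1 h := by
  unfold batchLoss
  rw [fderiv_fun_sum fun p hp =>
      (hasFDerivAt_sampleLoss hf hl fun h' => hnd h' p hp).differentiableAt, sum_apply]
  exact Finset.sum_congr rfl fun p hp =>
    fderiv_sampleLoss_apply hf hl (fun h' => hnd h' p hp) hu₂ hu

theorem gradP_batchLoss_weight
    (hf : Differentiable ℝ (fun q : (Fin r → ℝ) × (Fin H → ℝ) => f q.1 q.2))
    (hl : ∀ y, Differentiable ℝ (fun u => l u y))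
    {θ : Params d H r} {B : Finset ((Fin d → ℝ) × Y)}
    (hnd : ∀ h', ∀ p ∈ B, preact θ.1 θ.2.1 p.1 h' ≠ 0) (h : Fin H) (j : Fin d) :
    (gradP (fun ψ => batchLoss f l ψ B) θ).1 h j = ∑ p ∈ B, neuronDelta f l θ p h * p.1 j := by
  change fderiv ℝ (fun ψ : Params d H r => batchLoss f l ψ B) θ (Pi.single h (Pi.single j 1), 0, 0)
    = _
  rw [fderiv_batchLoss_apply hf hl hnd (h := h) rfl
    fun h' hh => ⟨Pi.single_eq_of_ne hh _, rfl⟩]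
  simp [preact, Pi.single_apply]

theorem gradP_batchLoss_bias
    (hf : Differentiable ℝ (fun q : (Fin r → ℝ) × (Fin H → ℝ) => f q.1 q.2))
    (hl : ∀ y, Differentiable ℝ (fun u => l u y))
    {θ : Params d H r} {B : Finset ((Fin d → ℝ) × Y)}
    (hnd : ∀ h', ∀ p ∈ B, preact θ.1 θ.2.1 p.1 h' ≠ 0) (h : Fin H) :
    (gradP (fun ψ => batchLoss f l ψ B) θ).2.1 h = ∑ p ∈ B, neuronDelta f l θ p h := by
  change fderiv ℝ (fun ψ : Params d H r => batchLoss f l ψ B) θ (0, Pi.single h 1, 0) = _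
  rw [fderiv_batchLoss_apply hf hl hnd (h := h) rfl
    fun h' hh => ⟨rfl, Pi.single_eq_of_ne hh _⟩]
  simp [preact]

end Loss

section LocalSGD

variable {d H r C : ℕ} {Y : Type*} {f : (Fin r → ℝ) → (Fin H → ℝ) → Fin C → ℝ}
  {l : (Fin C → ℝ) → Y → ℝ}

theorem sgdStep_neuron_eq_of_activB_eq_empty
    (hf : Differentiable ℝ (fun q : (Fin r → ℝ) × (Fin H → ℝ) => f q.1 q.2))
    (hl : ∀ y, Differentiable ℝ (fun u => l u y))
    {θ : Params d H r} {B : Finset ((Fin d → ℝ) × Y)} {h : Fin H}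
    (hnd : ∀ h', ∀ p ∈ B, preact θ.1 θ.2.1 p.1 h' ≠ 0) (hempty : activB f l θ B h = ∅) (η : ℝ) :
    (θ - η • gradP (fun ψ => batchLoss f l ψ B) θ).1 h = θ.1 h ∧
      (θ - η • gradP (fun ψ => batchLoss f l ψ B) θ).2.1 h = θ.2.1 h := by
  have hδ : ∀ p ∈ B, neuronDelta f l θ p h = 0 := fun p hp =>
    neuronDelta_eq_zero_of_notMem_activB f l hp (by simp [hempty])
  refine ⟨funext fun j => ?_, ?_⟩
  · change θ.1 h j - η * (gradP _ θ).1 h j = θ.1 h j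
    rw [gradP_batchLoss_weight hf hl hnd,
      Finset.sum_eq_zero fun p hp => by rw [hδ p hp, zero_mul], mul_zero, sub_zero]
  · change θ.2.1 h - η * (gradP _ θ).2.1 h = θ.2.1 h
    rw [gradP_batchLoss_bias hf hl hnd, Finset.sum_eq_zero hδ, mul_zero, sub_zero]

theorem neuron_eq_init_of_activB_eq_empty
    (hf : Differentiable ℝ (fun q : (Fin r → ℝ) × (Fin H → ℝ) => f q.1 q.2))
    (hl : ∀ y, Differentiable ℝ (fun u => l u y))
    {θs : ℕ → Params d H r} {B : ℕ → Finset ((Fin d → ℝ) × Y)} {η : ℝ} {h : Fin H} {m : ℕ}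
    (hstep : ∀ i < m, θs (i + 1) = θs i - η • gradP (fun ψ => batchLoss f l ψ (B i)) (θs i))
    (hnd : ∀ i < m, ∀ h', ∀ p ∈ B i, preact (θs i).1 (θs i).2.1 p.1 h' ≠ 0)
    (hempty : ∀ i < m, activB f l (θs i) (B i) h = ∅) :
    (θs m).1 h = (θs 0).1 h ∧ (θs m).2.1 h = (θs 0).2.1 h := by
  induction m with
  | zero => exact ⟨rfl, rfl⟩
  | succ m ih =>
    obtain ⟨hW, hb⟩ := ih (fun i hi => hstep i (by omega)) (fun i hi => hnd i (by omega))
      (fun i hi => hempty i (by omega))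
    obtain ⟨hW', hb'⟩ := sgdStep_neuron_eq_of_activB_eq_empty hf hl (hnd m m.lt_succ_self)
      (hempty m m.lt_succ_self) η
    rw [hstep m m.lt_succ_self]
    exact ⟨hW'.trans hW, hb'.trans hb⟩

theorem exists_mem_activB_preact_init_pos
    (hf : Differentiable ℝ (fun q : (Fin r → ℝ) × (Fin H → ℝ) => f q.1 q.2))
    (hl : ∀ y, Differentiable ℝ (fun u => l u y))
    {θs : ℕ → Params d H r} {B : ℕ → Finset ((Fin d → ℝ) × Y)} {η : ℝ} {h : Fin H} {n : ℕ}
    (hstep : ∀ i < n, θs (i + 1) = θs i - η • gradP (fun ψ => batchLoss f l ψ (B i)) (θs i))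
    (hnd : ∀ i < n, ∀ h', ∀ p ∈ B i, preact (θs i).1 (θs i).2.1 p.1 h' ≠ 0)
    (hact : ∃ i < n, (activB f l (θs i) (B i) h).Nonempty) :
    ∃ i < n, ∃ p ∈ activB f l (θs i) (B i) h, 0 < preact (θs 0).1 (θs 0).2.1 p.1 h := by
  classical
  obtain ⟨hfirst, p, hp⟩ := Nat.find_spec hact
  have hbefore : ∀ i < Nat.find hact, activB f l (θs i) (B i) h = ∅ := fun i hi =>
    Finset.not_nonempty_iff_eq_empty.1 fun hne => Nat.find_min hact hi ⟨hi.trans hfirst, hne⟩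
  obtain ⟨hW, hb⟩ := neuron_eq_init_of_activB_eq_empty hf hl
    (fun i hi => hstep i (hi.trans hfirst)) (fun i hi => hnd i (hi.trans hfirst)) hbefore
  refine ⟨_, hfirst, p, hp, ?_⟩
  simpa only [preact, hW, hb] using (Finset.mem_filter.1 hp).2.1

end LocalSGD

theorem stmt9_general {d H r C K : ℕ} {Y : Type*}
    (f : (Fin r → ℝ) → (Fin H → ℝ) → Fin C → ℝ)
    (l : (Fin C → ℝ) → Y → ℝ)
    (hf : Differentiable ℝ (fun q : (Fin r → ℝ) × (Fin H → ℝ) => f q.1 q.2))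
    (hl : ∀ y, Differentiable ℝ (fun u => l u y))
    (n : ℕ) (η : ℝ)
    (θprev : (Fin H → Fin d → ℝ) × (Fin H → ℝ) × (Fin r → ℝ))
    (D : Fin K → Finset ((Fin d → ℝ) × Y))
    (Bt : Fin K → ℕ → Finset ((Fin d → ℝ) × Y))
    (θ : Fin K → ℕ → ((Fin H → Fin d → ℝ) × (Fin H → ℝ) × (Fin r → ℝ)))
    (hBD : ∀ k, ∀ i < n, Bt k i ⊆ D k)
    (hinit : ∀ k, θ k 0 = θprev)
    (hstep : ∀ k, ∀ i < n,
      θ k (i + 1) = θ k i - η • gradP (fun ψ => batchLoss f l ψ (Bt k i)) (θ k i))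
    (hnd : ∀ k, ∀ i < n, ∀ h' : Fin H, ∀ p ∈ Bt k i,
      preact (θ k i).1 (θ k i).2.1 p.1 h' ≠ 0)
    (hunique : ∀ k₁ k₂ : Fin K, ∀ p₁ ∈ D k₁, ∀ p₂ ∈ D k₂, p₁.1 = p₂.1 → k₁ = k₂ ∧ p₁ = p₂)
    (h : Fin H) (k : Fin K) (x' : Fin d → ℝ)
    (hsingle : {x0 | x0 ∈ roundActiv f l n θ Bt h ∧
        0 < preact θprev.1 θprev.2.1 x0 h} = {x'})
    (hx'k : ∃ y', (x', y') ∈ D k) :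
    ∀ x ∈ roundActiv f l n θ Bt h, ∃ y, (x, y) ∈ D k := by
  rintro x ⟨k', i, hi, y, hxy⟩
  have mem_D : ∀ {j}, j < n → ∀ {q}, q ∈ activB f l (θ k' j) (Bt k' j) h → q ∈ D k' :=
    fun hj _ hq => hBD k' _ hj (Finset.filter_subset _ _ hq)
  obtain ⟨j, hj, p, hp, hpos⟩ := exists_mem_activB_preact_init_pos hf hl (hstep k') (hnd k')
    ⟨i, hi, _, hxy⟩
  rw [hinit] at hpos
  have hpx : p.1 = x' := by
    have hpA : p.1 ∈ {x0 | x0 ∈ roundActiv f l n θ Bt h ∧ 0 < preact θprev.1 θprev.2.1 x0 h} :=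
      ⟨⟨k', j, hj, p.2, hp⟩, hpos⟩
    rwa [hsingle] at hpA
  obtain ⟨y', hy'⟩ := hx'k
  obtain rfl := (hunique k' k p (mem_D hj hp) (x', y') hy' hpx).1
  exact ⟨y, mem_D hi hxy⟩

theorem stmt9 {d H r C K : ℕ} {Y : Type*} (hK : 0 < K)
    (f : (Fin r → ℝ) → (Fin H → ℝ) → Fin C → ℝ)
    (l : (Fin C → ℝ) → Y → ℝ)
    (hf : Differentiable ℝ (fun q : (Fin r → ℝ) × (Fin H → ℝ) => f q.1 q.2))
    (hl : ∀ y, Differentiable ℝ (fun u => l u y))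
    (n : ℕ) (η : ℝ) (hη : 0 < η)
    (θprev : (Fin H → Fin d → ℝ) × (Fin H → ℝ) × (Fin r → ℝ))
    (D : Fin K → Finset ((Fin d → ℝ) × Y))
    (Bt : Fin K → ℕ → Finset ((Fin d → ℝ) × Y))
    (θ : Fin K → ℕ → ((Fin H → Fin d → ℝ) × (Fin H → ℝ) × (Fin r → ℝ)))
    (hBD : ∀ k, ∀ i < n, Bt k i ⊆ D k)
    (hinit : ∀ k, θ k 0 = θprev)
    (hstep : ∀ k, ∀ i < n,
      θ k (i + 1) = θ k i - η • gradP (fun ψ => batchLoss f l ψ (Bt k i)) (θ k i))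
    (hnd : ∀ k, ∀ i < n, ∀ h' : Fin H, ∀ p ∈ Bt k i,
      preact (θ k i).1 (θ k i).2.1 p.1 h' ≠ 0)
    (hunique : ∀ k₁ k₂ : Fin K, ∀ p₁ ∈ D k₁, ∀ p₂ ∈ D k₂, p₁.1 = p₂.1 → k₁ = k₂ ∧ p₁ = p₂)
    (h : Fin H) (k : Fin K) (x' : Fin d → ℝ)
    (hsingle : {x0 | x0 ∈ roundActiv f l n θ Bt h ∧
        0 < preact θprev.1 θprev.2.1 x0 h} = {x'})
    (hx'k : ∃ y', (x', y') ∈ D k) :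
    ∀ x ∈ roundActiv f l n θ Bt h, ∃ y, (x, y) ∈ D k :=
  stmt9_general f l hf hl n η θprev D Bt θ hBD hinit hstep hnd hunique h k x' hsingle hx'k
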